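/- Let δ > 0, C > 0, let σ be a real m×n matrix with σσᵀ ≥ δ·I_m and |σ| ≤ C, let μ ∈ ℝ^m with |μ| ≤ C, and let Π ⊆ ℝ^m be a nonempty closed convex cone. Define F̃(v,V) := |σᵀv|² + 2vᵀ(μ + σV) and F̃*(V) := inf_{v∈Π} F̃(v,V). Then there is a constant c₁ > 0 depending only on δ and C such that for all V, Ṽ ∈ ℝⁿ: |F̃*(V) − F̃*(Ṽ)| ≤ sup{ |2vᵀσ(V−Ṽ)| : v ∈ Π, |v| ≤ c₁(1+|V|+|Ṽ|) } ≤ 2c₁C·(1+|V|+|Ṽ|)·|V−Ṽ|. -/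

import Mathlib

open Matrix Set

/-- Euclidean norm of a vector, written via the dot product. -/
noncomputable def vecNorm {m : ℕ} (v : Fin m → ℝ) : ℝ := Real.sqrt (v ⬝ᵥ v)

/-- `F̃(v,V) := |σᵀv|² + 2vᵀ(μ + σV)`. -/
noncomputable def Ft {m n : ℕ} (σ : Matrix (Fin m) (Fin n) ℝ) (μ : Fin m → ℝ)
    (V : Fin n → ℝ) (v : Fin m → ℝ) : ℝ :=
  (σᵀ *ᵥ v) ⬝ᵥ (σᵀ *ᵥ v) + 2 * (v ⬝ᵥ (μ + σ *ᵥ V))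

/-!
The infimum over `K` of `F̃(·, W)` is at most `F̃(0, W) = 0`, and by `σσᵀ ≥ δ` the function
`F̃(·, W)` grows like `δ|v|² − 2C(1 + |W|)|v|`, so it is nonnegative once
`|v| ≥ 2C(1 + |W|)/δ`. Hence both infima `F̃*(V)`, `F̃*(Ṽ)` are decided on the ball
`|v| ≤ c₁(1 + |V| + |Ṽ|)` with `c₁ = 2C/δ`, where `F̃(v, V) − F̃(v, Ṽ) = 2vᵀσ(V − Ṽ)`;
Cauchy–Schwarz then bounds this pairing by `2c₁C(1 + |V| + |Ṽ|)|V − Ṽ|`.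
-/

section EuclideanNorm

variable {m n : ℕ}

lemma vecNorm_nonneg (v : Fin m → ℝ) : 0 ≤ vecNorm v := Real.sqrt_nonneg _

lemma vecNorm_sq (v : Fin m → ℝ) : vecNorm v ^ 2 = v ⬝ᵥ v :=
  Real.sq_sqrt (Finset.sum_nonneg fun i _ => mul_self_nonneg (v i))

@[simp]
lemma vecNorm_zero : vecNorm (0 : Fin m → ℝ) = 0 := by simp [vecNorm]

lemma vecNorm_eq_norm_toLp (v : Fin m → ℝ) : vecNorm v = ‖WithLp.toLp 2 v‖ := by
  simp [vecNorm, EuclideanSpace.norm_eq, dotProduct, sq]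

lemma abs_dotProduct_le (v w : Fin m → ℝ) : |v ⬝ᵥ w| ≤ vecNorm v * vecNorm w := by
  have h := abs_real_inner_le_norm (WithLp.toLp 2 w : EuclideanSpace ℝ (Fin m)) (WithLp.toLp 2 v)
  rwa [EuclideanSpace.inner_eq_star_dotProduct, star_trivial, mul_comm,
    ← vecNorm_eq_norm_toLp, ← vecNorm_eq_norm_toLp] at h

lemma vecNorm_mulVec_le (σ : Matrix (Fin m) (Fin n) ℝ) (V : Fin n → ℝ) :
    vecNorm (σ *ᵥ V) ≤ Real.sqrt (∑ i, ∑ j, σ i j ^ 2) * vecNorm V := by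
  have hrow : ∀ i, (σ *ᵥ V) i * (σ *ᵥ V) i ≤ (∑ j, σ i j ^ 2) * (V ⬝ᵥ V) := fun i => by
    have := abs_dotProduct_le (σ i) V
    rw [← sq_le_sq₀ (abs_nonneg _) (mul_nonneg (vecNorm_nonneg _) (vecNorm_nonneg _)),
      sq_abs, mul_pow, vecNorm_sq, vecNorm_sq] at this
    simpa [mulVec, dotProduct, sq] using this
  calc vecNorm (σ *ᵥ V) ≤ Real.sqrt ((∑ i, ∑ j, σ i j ^ 2) * (V ⬝ᵥ V)) := by
        rw [Finset.sum_mul]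
        exact Real.sqrt_le_sqrt (Finset.sum_le_sum fun i _ => hrow i)
    _ = Real.sqrt (∑ i, ∑ j, σ i j ^ 2) * vecNorm V := Real.sqrt_mul (by positivity) _

lemma abs_dotProduct_mulVec_le {σ : Matrix (Fin m) (Fin n) ℝ} {C : ℝ}
    (hσC : Real.sqrt (∑ i, ∑ j, σ i j ^ 2) ≤ C) (v : Fin m → ℝ) (W : Fin n → ℝ) :
    |v ⬝ᵥ (σ *ᵥ W)| ≤ C * (vecNorm v * vecNorm W) :=
  calc |v ⬝ᵥ (σ *ᵥ W)| ≤ vecNorm v * vecNorm (σ *ᵥ W) := abs_dotProduct_le v _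
    _ ≤ vecNorm v * (C * vecNorm W) := by
        gcongr
        · exact vecNorm_nonneg v
        · exact (vecNorm_mulVec_le σ W).trans (by gcongr; exact vecNorm_nonneg W)
    _ = C * (vecNorm v * vecNorm W) := by ring

lemma mul_dotProduct_self_le_of_posSemidef {δ : ℝ} {σ : Matrix (Fin m) (Fin n) ℝ}
    (hpsd : (σ * σᵀ - δ • (1 : Matrix (Fin m) (Fin m) ℝ)).PosSemidef) (v : Fin m → ℝ) :
    δ * (v ⬝ᵥ v) ≤ (σᵀ *ᵥ v) ⬝ᵥ (σᵀ *ᵥ v) := by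
  have h := hpsd.dotProduct_mulVec_nonneg v
  rw [star_trivial, sub_mulVec, dotProduct_sub, smul_mulVec, one_mulVec, dotProduct_smul,
    smul_eq_mul, ← mulVec_mulVec, dotProduct_mulVec, ← mulVec_transpose] at h
  linarith

end EuclideanNorm

section Ft

variable {m n : ℕ} {σ : Matrix (Fin m) (Fin n) ℝ} {μ : Fin m → ℝ}

@[simp]
lemma Ft_zero_right (V : Fin n → ℝ) : Ft σ μ V 0 = 0 := by simp [Ft]

lemma Ft_sub_Ft (V V' : Fin n → ℝ) (v : Fin m → ℝ) :
    Ft σ μ V v - Ft σ μ V' v = 2 * (v ⬝ᵥ (σ *ᵥ (V - V'))) := by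
  simp only [Ft, mulVec_sub, dotProduct_add, dotProduct_sub]
  ring

variable {δ C : ℝ} (hpsd : (σ * σᵀ - δ • (1 : Matrix (Fin m) (Fin m) ℝ)).PosSemidef)
  (hσC : Real.sqrt (∑ i, ∑ j, σ i j ^ 2) ≤ C) (hμC : vecNorm μ ≤ C)
include hpsd hσC hμC

lemma sub_le_Ft (W : Fin n → ℝ) (v : Fin m → ℝ) :
    δ * vecNorm v ^ 2 - 2 * C * (1 + vecNorm W) * vecNorm v ≤ Ft σ μ W v := by
  have hquad := mul_dotProduct_self_le_of_posSemidef hpsd v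
  have hμ : |v ⬝ᵥ μ| ≤ vecNorm v * C :=
    (abs_dotProduct_le v μ).trans (mul_le_mul_of_nonneg_left hμC (vecNorm_nonneg v))
  have hσ := abs_dotProduct_mulVec_le hσC v W
  have hFt : Ft σ μ W v
      = (σᵀ *ᵥ v) ⬝ᵥ (σᵀ *ᵥ v) + 2 * (v ⬝ᵥ μ) + 2 * (v ⬝ᵥ (σ *ᵥ W)) := by
    simp only [Ft, dotProduct_add]
    ring
  rw [hFt, vecNorm_sq]
  linarith [neg_abs_le (v ⬝ᵥ μ), neg_abs_le (v ⬝ᵥ (σ *ᵥ W))]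

lemma Ft_nonneg_of_le {W : Fin n → ℝ} {v : Fin m → ℝ}
    (h : 2 * C * (1 + vecNorm W) ≤ δ * vecNorm v) : 0 ≤ Ft σ μ W v := by
  refine le_trans ?_ (sub_le_Ft hpsd hσC hμC W v)
  nlinarith [vecNorm_nonneg v]

lemma bddBelow_range_Ft (hδ : 0 < δ) (W : Fin n → ℝ) : BddBelow (range (Ft σ μ W)) := by
  refine ⟨-(C * (1 + vecNorm W)) ^ 2 / δ, ?_⟩
  rintro _ ⟨v, rfl⟩
  refine le_trans ?_ (sub_le_Ft hpsd hσC hμC W v)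
  rw [div_le_iff₀ hδ]
  nlinarith [sq_nonneg (δ * vecNorm v - C * (1 + vecNorm W))]

end Ft

lemma sInf_image_le_sInf_image_add {α : Type*} {K : Set α} {f g : α → ℝ} {s : ℝ}
    (hK : K.Nonempty) (hf : BddBelow (f '' K)) (hf0 : sInf (f '' K) ≤ 0) (hs : 0 ≤ s)
    (h : ∀ v ∈ K, f v ≤ g v + s ∨ 0 ≤ g v) : sInf (f '' K) ≤ sInf (g '' K) + s := by
  rw [← sub_le_iff_le_add]
  refine le_csInf (hK.image g) ?_
  rintro _ ⟨v, hv, rfl⟩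
  rw [sub_le_iff_le_add]
  rcases h v hv with hfg | hg
  · exact (csInf_le hf (mem_image_of_mem f hv)).trans hfg
  · linarith

lemma abs_sInf_image_sub_le {α : Type*} {K : Set α} {f g : α → ℝ} {s : ℝ}
    (hK : K.Nonempty) (hf : BddBelow (f '' K)) (hg : BddBelow (g '' K))
    (hf0 : sInf (f '' K) ≤ 0) (hg0 : sInf (g '' K) ≤ 0) (hs : 0 ≤ s)
    (h : ∀ v ∈ K, |f v - g v| ≤ s ∨ 0 ≤ f v ∧ 0 ≤ g v) :
    |sInf (f '' K) - sInf (g '' K)| ≤ s := by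
  rw [abs_sub_le_iff, sub_le_iff_le_add', sub_le_iff_le_add']
  constructor
  · refine sInf_image_le_sInf_image_add hK hf hf0 hs fun v hv => ?_
    rcases h v hv with hfg | hfg
    · exact Or.inl (by linarith [le_abs_self (f v - g v)])
    · exact Or.inr hfg.2
  · refine sInf_image_le_sInf_image_add hK hg hg0 hs fun v hv => ?_
    rcases h v hv with hfg | hfg
    · exact Or.inl (by linarith [neg_abs_le (f v - g v)])
    · exact Or.inr hfg.1

section PairingsOnBall

variable {m n : ℕ}

def pairingsOnBall (K : Set (Fin m → ℝ)) (σ : Matrix (Fin m) (Fin n) ℝ) (R : ℝ)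
    (U : Fin n → ℝ) : Set ℝ :=
  {x : ℝ | ∃ v ∈ K, vecNorm v ≤ R ∧ x = |2 * (v ⬝ᵥ (σ *ᵥ U))|}

variable {K : Set (Fin m → ℝ)} {σ : Matrix (Fin m) (Fin n) ℝ} {C R : ℝ}
  (hσC : Real.sqrt (∑ i, ∑ j, σ i j ^ 2) ≤ C)
include hσC

lemma le_of_mem_pairingsOnBall {U : Fin n → ℝ} {x : ℝ} (hx : x ∈ pairingsOnBall K σ R U) :
    x ≤ 2 * R * C * vecNorm U := by
  obtain ⟨v, -, hvR, rfl⟩ := hx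
  have hC : 0 ≤ C := (Real.sqrt_nonneg _).trans hσC
  rw [abs_mul, abs_two]
  calc 2 * |v ⬝ᵥ (σ *ᵥ U)| ≤ 2 * (C * (vecNorm v * vecNorm U)) := by
        gcongr; exact abs_dotProduct_mulVec_le hσC v U
    _ ≤ 2 * (C * (R * vecNorm U)) := by
        gcongr; exact vecNorm_nonneg U
    _ = 2 * R * C * vecNorm U := by ring

lemma abs_two_mul_dotProduct_le_sSup {U : Fin n → ℝ} {v : Fin m → ℝ} (hv : v ∈ K)
    (hvR : vecNorm v ≤ R) : |2 * (v ⬝ᵥ (σ *ᵥ U))| ≤ sSup (pairingsOnBall K σ R U) :=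
  le_csSup ⟨_, fun _ hx => le_of_mem_pairingsOnBall hσC hx⟩ ⟨v, hv, hvR, rfl⟩

lemma sSup_pairingsOnBall_le (h0 : 0 ∈ K) (hR : 0 ≤ R) (U : Fin n → ℝ) :
    sSup (pairingsOnBall K σ R U) ≤ 2 * R * C * vecNorm U :=
  csSup_le ⟨0, 0, h0, by simpa using hR, by simp⟩ fun _ hx => le_of_mem_pairingsOnBall hσC hx

end PairingsOnBall

theorem stmt8_general {m n : ℕ} (δ C : ℝ) (hδ : 0 < δ) (hC : 0 < C)
    (σ : Matrix (Fin m) (Fin n) ℝ)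
    (hpsd : (σ * σᵀ - δ • (1 : Matrix (Fin m) (Fin m) ℝ)).PosSemidef)
    (hσC : Real.sqrt (∑ i, ∑ j, σ i j ^ 2) ≤ C)
    (μ : Fin m → ℝ) (hμC : vecNorm μ ≤ C)
    (K : Set (Fin m → ℝ)) (h0 : (0 : Fin m → ℝ) ∈ K) :
    ∃ c₁ : ℝ, 0 < c₁ ∧
      ∀ V V' : Fin n → ℝ,
        |sInf (Ft σ μ V '' K) - sInf (Ft σ μ V' '' K)|
            ≤ sSup {x : ℝ | ∃ v ∈ K, vecNorm v ≤ c₁ * (1 + vecNorm V + vecNorm V') ∧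
                x = |2 * (v ⬝ᵥ (σ *ᵥ (V - V')))|} ∧
        sSup {x : ℝ | ∃ v ∈ K, vecNorm v ≤ c₁ * (1 + vecNorm V + vecNorm V') ∧
                x = |2 * (v ⬝ᵥ (σ *ᵥ (V - V')))|}
            ≤ 2 * c₁ * C * (1 + vecNorm V + vecNorm V') * vecNorm (V - V') := by
  have hbdd (W : Fin n → ℝ) : BddBelow (Ft σ μ W '' K) :=
    (bddBelow_range_Ft hpsd hσC hμC hδ W).mono (image_subset_range _ _)
  have hinf (W : Fin n → ℝ) : sInf (Ft σ μ W '' K) ≤ 0 :=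
    csInf_le (hbdd W) ⟨0, h0, Ft_zero_right W⟩
  refine ⟨2 * C / δ, by positivity, fun V V' => ?_⟩
  set R := 2 * C / δ * (1 + vecNorm V + vecNorm V') with hR_def
  have hR : 0 ≤ R := by
    have := vecNorm_nonneg V; have := vecNorm_nonneg V'; positivity
  -- `c₁ = 2C/δ` makes `δ R` dominate the linear coefficient `2C(1 + |W|)` of `sub_le_Ft`
  -- for `W = V, V'`, so both `Ft`'s are nonnegative outside the ball of radius `R`.
  have hδR : δ * R = 2 * C * (1 + vecNorm V + vecNorm V') := by
    rw [hR_def]; field_simp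
  have hout (W : Fin n → ℝ) (hW : vecNorm W ≤ vecNorm V + vecNorm V') (v : Fin m → ℝ)
      (hv : R < vecNorm v) : 0 ≤ Ft σ μ W v :=
    Ft_nonneg_of_le hpsd hσC hμC <|
      calc 2 * C * (1 + vecNorm W) ≤ 2 * C * (1 + vecNorm V + vecNorm V') :=
            mul_le_mul_of_nonneg_left (by linarith) (by positivity)
        _ = δ * R := hδR.symm
        _ ≤ δ * vecNorm v := by gcongr
  change _ ≤ sSup (pairingsOnBall K σ R (V - V')) ∧ sSup (pairingsOnBall K σ R (V - V')) ≤ _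
  refine ⟨abs_sInf_image_sub_le ⟨0, h0⟩ (hbdd V) (hbdd V') (hinf V) (hinf V')
    (Real.sSup_nonneg fun _ ⟨_, _, _, hx⟩ => hx ▸ abs_nonneg _) fun v hv => ?_, ?_⟩
  · by_cases hvR : vecNorm v ≤ R
    · exact Or.inl (Ft_sub_Ft V V' v ▸ abs_two_mul_dotProduct_le_sSup hσC hv hvR)
    · replace hvR := not_le.mp hvR
      exact Or.inr ⟨hout V (by linarith [vecNorm_nonneg V']) v hvR,
        hout V' (by linarith [vecNorm_nonneg V]) v hvR⟩
  · exact (sSup_pairingsOnBall_le hσC h0 hR _).trans_eq (by rw [hR_def]; ring)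

/-- with `F̃*(V) := inf_{v∈K} F̃(v,V)`, there is `c₁ > 0` (depending only on
`δ, C`) such that for all `V, Ṽ`:
`|F̃*(V) − F̃*(Ṽ)| ≤ sup{ |2vᵀσ(V−Ṽ)| : v ∈ K, |v| ≤ c₁(1+|V|+|Ṽ|) }
  ≤ 2c₁C(1+|V|+|Ṽ|)|V−Ṽ|`. -/
theorem stmt8 {m n : ℕ} (δ C : ℝ) (hδ : 0 < δ) (hC : 0 < C)
    (σ : Matrix (Fin m) (Fin n) ℝ)
    (hpsd : (σ * σᵀ - δ • (1 : Matrix (Fin m) (Fin m) ℝ)).PosSemidef)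
    (hσC : Real.sqrt (∑ i, ∑ j, σ i j ^ 2) ≤ C)
    (μ : Fin m → ℝ) (hμC : vecNorm μ ≤ C)
    (K : Set (Fin m → ℝ)) (hne : K.Nonempty) (hcl : IsClosed K) (hcv : Convex ℝ K)
    (hcone : ∀ v ∈ K, ∀ c : ℝ, 0 ≤ c → c • v ∈ K) (h0 : (0 : Fin m → ℝ) ∈ K) :
    ∃ c₁ : ℝ, 0 < c₁ ∧
      ∀ V V' : Fin n → ℝ,
        |sInf (Ft σ μ V '' K) - sInf (Ft σ μ V' '' K)|
            ≤ sSup {x : ℝ | ∃ v ∈ K, vecNorm v ≤ c₁ * (1 + vecNorm V + vecNorm V') ∧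
                x = |2 * (v ⬝ᵥ (σ *ᵥ (V - V')))|} ∧
        sSup {x : ℝ | ∃ v ∈ K, vecNorm v ≤ c₁ * (1 + vecNorm V + vecNorm V') ∧
                x = |2 * (v ⬝ᵥ (σ *ᵥ (V - V')))|}
            ≤ 2 * c₁ * C * (1 + vecNorm V + vecNorm V') * vecNorm (V - V') :=
  stmt8_general δ C hδ hC σ hpsd hσC μ hμC K h0
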